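/- Let D be a PVMD, let P be a maximal t-ideal of D, and let I and J be rigid ideals of D contained in P (P-ideals). Then I ⊆ J or J ⊆ I, i.e., the set of P-ideals is totally ordered by inclusion. -/

import Mathlib

open scoped nonZeroDivisors

variable (D : Type*) [CommRing D] [IsDomain D]
variable (K : Type*) [Field K] [Algebra D K] [IsFractionRing D K]

/-- The `v`-operation: `I_v = (I⁻¹)⁻¹`, viewed as a `D`-submodule of `K`. -/
noncomputable def vSub (I : FractionalIdeal D⁰ K) : Submodule D K :=
  (((I⁻¹)⁻¹ : FractionalIdeal D⁰ K) : Submodule D K)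

/-- The `t`-operation: `I_t = ⋃ {J_v : J ⊆ I nonzero finitely generated}`. -/
noncomputable def tSub (I : FractionalIdeal D⁰ K) : Submodule D K :=
  ⨆ J : {J : FractionalIdeal D⁰ K // J ≠ 0 ∧ (J : Submodule D K).FG ∧ J ≤ I}, vSub D K J.1

/-- A fractional ideal `I` is `t`-invertible if `(I * I⁻¹)_t = D`. -/
noncomputable def IsTInvertible (I : FractionalIdeal D⁰ K) : Prop :=
  tSub D K (I * I⁻¹) = ((1 : FractionalIdeal D⁰ K) : Submodule D K)

/-- An integral ideal `I` of `D` is a `t`-ideal if `I_t = I`. -/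
noncomputable def IsTIdeal (I : Ideal D) : Prop :=
  tSub D K (I : FractionalIdeal D⁰ K) = ((I : FractionalIdeal D⁰ K) : Submodule D K)

/-- `D` is a PVMD: every nonzero finitely generated integral ideal is `t`-invertible. -/
noncomputable def IsPVMD : Prop :=
  ∀ I : Ideal D, I ≠ ⊥ → I.FG → IsTInvertible D K (I : FractionalIdeal D⁰ K)

/-- `P` is a maximal `t`-ideal: a proper integral `t`-ideal maximal among such. -/
noncomputable def IsMaximalTIdeal (P : Ideal D) : Prop :=
  IsTIdeal D K P ∧ P ≠ ⊤ ∧ ∀ Q : Ideal D, IsTIdeal D K Q → Q ≠ ⊤ → P ≤ Q → P = Q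

/-- `I` is a rigid ideal contained in the maximal `t`-ideal `P` (a `P`-ideal):
a `v`-ideal of finite type contained in `P` and in no other maximal `t`-ideal. -/
noncomputable def IsPIdeal (P I : Ideal D) : Prop :=
  (∃ A : Ideal D, A ≠ ⊥ ∧ A.FG ∧
      ((I : FractionalIdeal D⁰ K) : Submodule D K) = vSub D K (A : FractionalIdeal D⁰ K)) ∧
    I ≤ P ∧ ∀ Q : Ideal D, IsMaximalTIdeal D K Q → I ≤ Q → Q = P

/-!
Write `I = A_v`, `J = B_v` with `A`, `B` finitely generated and put `H = (A + B)_v`; it is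
`t`-invertible because `D` is a PVMD, and `I, J ⊆ H ⊆ D`. For a `P`-ideal `I ⊆ H` either
`(I H⁻¹)_t = D`, and then `H ⊆ (H · I H⁻¹)_t ⊆ I_t = I`, or `I H⁻¹` lies in some maximal `t`-ideal
`Q`; then `I ⊆ (I H H⁻¹)_t ⊆ Q`, so `Q = P` by rigidity. If neither `H ⊆ I` nor `H ⊆ J`, then
`(A + B)(A + B)⁻¹ ⊆ I H⁻¹ + J H⁻¹ ⊆ P`, and the `t`-closure of the left side is `D`.
-/

open FractionalIdeal

namespace FractionalIdeal

theorem mul_ne_zero_of_ne_zero {D K : Type*} [CommRing D] [Field K] [Algebra D K]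
    {I J : FractionalIdeal D⁰ K} (hI : I ≠ 0) (hJ : J ≠ 0) : I * J ≠ 0 := by
  obtain ⟨x, hxI, hx⟩ := Submodule.exists_mem_ne_zero_of_ne_bot (coeToSubmodule_ne_bot.mpr hI)
  obtain ⟨y, hyJ, hy⟩ := Submodule.exists_mem_ne_zero_of_ne_bot (coeToSubmodule_ne_bot.mpr hJ)
  intro h0
  have hxy : x * y ∈ I * J := mul_mem_mul hxI hyJ
  rw [h0, mem_zero_iff] at hxy
  exact mul_ne_zero hx hy hxy

variable {D : Type*} [CommRing D] [IsDomain D]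
variable {K : Type*} [Field K] [Algebra D K] [IsFractionRing D K]

theorem inv_ne_zero_of_ne_zero {I : FractionalIdeal D⁰ K} (hI : I ≠ 0) : I⁻¹ ≠ 0 := by
  obtain ⟨a, ha, h⟩ := I.isFractional
  have hmem : algebraMap D K a ∈ I⁻¹ := by
    rw [mem_inv_iff hI]
    intro y hy
    obtain ⟨x, hx⟩ := h y hy
    exact (mem_one_iff _).mpr ⟨x, by rw [hx, Algebra.smul_def]⟩
  intro h0
  rw [h0, mem_zero_iff] at hmem
  exact IsFractionRing.to_map_ne_zero_of_mem_nonZeroDivisors ha hmem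

theorem mul_inv_le_one' (I : FractionalIdeal D⁰ K) : I * I⁻¹ ≤ 1 := by
  rw [inv_eq]
  exact mul_one_div_le_one

theorem le_inv_inv (I : FractionalIdeal D⁰ K) : I ≤ I⁻¹⁻¹ := by
  rcases eq_or_ne I 0 with rfl | hI
  · exact zero_le _
  rw [inv_eq (I := I⁻¹), le_div_iff_mul_le (inv_ne_zero_of_ne_zero hI)]
  exact mul_inv_le_one' I

theorem inv_inv_mono {I J : FractionalIdeal D⁰ K} (h : I ≤ J) : I⁻¹⁻¹ ≤ J⁻¹⁻¹ := by
  rcases eq_or_ne I 0 with rfl | hI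
  · rw [inv_zero', inv_zero']
    exact zero_le _
  have hJ : J ≠ 0 := ne_bot_of_le_ne_bot hI h
  exact inv_anti_mono (inv_ne_zero_of_ne_zero hJ) (inv_ne_zero_of_ne_zero hI)
    (inv_anti_mono hI hJ h)

theorem inv_inv_inv (I : FractionalIdeal D⁰ K) : I⁻¹⁻¹⁻¹ = I⁻¹ := by
  rcases eq_or_ne I 0 with rfl | hI
  · simp only [inv_zero']
  exact le_antisymm (inv_anti_mono hI (ne_bot_of_le_ne_bot hI (le_inv_inv I)) (le_inv_inv I))
    (le_inv_inv I⁻¹)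

theorem mul_inv_inv_le (E F : FractionalIdeal D⁰ K) : E * F⁻¹⁻¹ ≤ (E * F)⁻¹⁻¹ := by
  rcases eq_or_ne E 0 with rfl | hE
  · rw [zero_mul]
    exact zero_le _
  rcases eq_or_ne F 0 with rfl | hF
  · rw [inv_zero', inv_zero', mul_zero]
    exact zero_le _
  rw [inv_eq (I := (E * F)⁻¹),
    le_div_iff_mul_le (inv_ne_zero_of_ne_zero (mul_ne_zero_of_ne_zero hE hF))]
  have hEF : E * (E * F)⁻¹ ≤ F⁻¹ := by
    rw [inv_eq (I := F), le_div_iff_mul_le hF]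
    calc E * (E * F)⁻¹ * F = (E * F) * (E * F)⁻¹ := by ring
      _ ≤ 1 := mul_inv_le_one' _
  calc E * F⁻¹⁻¹ * (E * F)⁻¹ = F⁻¹⁻¹ * (E * (E * F)⁻¹) := by ring
    _ ≤ F⁻¹⁻¹ * F⁻¹ := by gcongr
    _ ≤ 1 := by rw [mul_comm]; exact mul_inv_le_one' _

end FractionalIdeal

theorem Submodule.FG.exists_le_of_le_iSup {R M ι : Type*} [Semiring R] [AddCommMonoid M]
    [Module R M] [Nonempty ι] {f : ι → Submodule R M} (hf : Directed (· ≤ ·) f)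
    {N : Submodule R M} (hN : N.FG) (h : N ≤ ⨆ i, f i) : ∃ i, N ≤ f i := by
  obtain ⟨_, ⟨i, rfl⟩, hi⟩ :=
    (CompleteLattice.isCompactElement_iff_le_of_directed_sSup_le (α := Submodule R M) N).mp
      ((Submodule.fg_iff_compact N).mp hN) (Set.range f) (Set.range_nonempty f)
      (directedOn_range.mpr hf) (by rwa [sSup_range])
  exact ⟨i, hi⟩

theorem FractionalIdeal.coe_coeIdeal_sSup {R P : Type*} [CommRing R] {S : Submonoid R}
    [CommRing P] [Algebra R P] (c : Set (Ideal R)) :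
    (((sSup c : Ideal R) : FractionalIdeal S P) : Submodule R P) =
      ⨆ Q : c, (((Q : Ideal R) : FractionalIdeal S P) : Submodule R P) := by
  simp only [coe_coeIdeal, IsLocalization.coeSubmodule, sSup_eq_iSup', Submodule.map_iSup]

section TOperation

variable {D : Type*} [CommRing D] [IsDomain D]
variable {K : Type*} [Field K] [Algebra D K] [IsFractionRing D K]

theorem vSub_mono {I J : FractionalIdeal D⁰ K} (h : I ≤ J) : vSub D K I ≤ vSub D K J :=
  coe_le_coe.mpr (inv_inv_mono h)

theorem vSub_inv_inv (I : FractionalIdeal D⁰ K) : vSub D K I⁻¹⁻¹ = vSub D K I := by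
  simp only [vSub, inv_inv_inv]

theorem vSub_le_tSub {G I : FractionalIdeal D⁰ K} (hG : G ≠ 0) (hGfg : (G : Submodule D K).FG)
    (hGI : G ≤ I) : vSub D K G ≤ tSub D K I :=
  le_iSup (fun J : {J : FractionalIdeal D⁰ K // J ≠ 0 ∧ (J : Submodule D K).FG ∧ J ≤ I} =>
    vSub D K J.1) ⟨G, hG, hGfg, hGI⟩

theorem tSub_mono {I J : FractionalIdeal D⁰ K} (h : I ≤ J) : tSub D K I ≤ tSub D K J :=
  iSup_le fun G => vSub_le_tSub G.2.1 G.2.2.1 (G.2.2.2.trans h)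

theorem tSub_le_vSub (I : FractionalIdeal D⁰ K) : tSub D K I ≤ vSub D K I :=
  iSup_le fun G => vSub_mono G.2.2.2

theorem le_tSub (I : FractionalIdeal D⁰ K) : (I : Submodule D K) ≤ tSub D K I := by
  intro x hx
  rcases eq_or_ne x 0 with rfl | hx0
  · exact zero_mem _
  have hxG : x ∈ vSub D K (spanSingleton D⁰ x) :=
    coe_le_coe.mpr (le_inv_inv _) (mem_spanSingleton_self D⁰ x)
  refine vSub_le_tSub (spanSingleton_eq_zero_iff.not.mpr hx0) ?_
    (spanSingleton_le_iff_mem.mpr hx) hxG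
  rw [coe_spanSingleton]
  exact Submodule.fg_span_singleton x

theorem tSub_one :
    tSub D K (1 : FractionalIdeal D⁰ K) = ((1 : FractionalIdeal D⁰ K) : Submodule D K) := by
  refine le_antisymm ((tSub_le_vSub _).trans ?_) (le_tSub _)
  simp only [vSub, inv_one, le_rfl]

theorem tSub_directed (I : FractionalIdeal D⁰ K) :
    Directed (· ≤ ·)
      (fun J : {J : FractionalIdeal D⁰ K // J ≠ 0 ∧ (J : Submodule D K).FG ∧ J ≤ I} =>
        vSub D K J.1) := by
  rintro ⟨G, hG, hGfg, hGI⟩ ⟨G', -, hG'fg, hG'I⟩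
  refine ⟨⟨G + G', ne_bot_of_le_ne_bot hG le_self_add, ?_, ?_⟩,
    vSub_mono le_self_add, vSub_mono le_add_self⟩
  · rw [coe_add]
    exact hGfg.sup hG'fg
  · rw [← sup_eq_add]
    exact sup_le hGI hG'I

/-- The `t`-operation is idempotent. -/
theorem tSub_eq_of_coe_eq_tSub {I E : FractionalIdeal D⁰ K}
    (h : (E : Submodule D K) = tSub D K I) : tSub D K E = tSub D K I := by
  refine le_antisymm (iSup_le ?_) (tSub_mono (coe_le_coe.mp (h ▸ le_tSub I)))
  rintro ⟨G, hG, hGfg, hGE⟩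
  have hGI : (G : Submodule D K) ≤ tSub D K I := h ▸ coe_le_coe.mpr hGE
  cases isEmpty_or_nonempty
      {J : FractionalIdeal D⁰ K // J ≠ 0 ∧ (J : Submodule D K).FG ∧ J ≤ I} with
  | inl hempty =>
    rw [tSub, iSup_of_empty, le_bot_iff, coeToSubmodule_eq_bot] at hGI
    exact absurd hGI hG
  | inr hne =>
    obtain ⟨⟨M, hM, hMfg, hMI⟩, hGM⟩ := hGfg.exists_le_of_le_iSup (tSub_directed I) hGI
    calc vSub D K G ≤ vSub D K M⁻¹⁻¹ := vSub_mono (coe_le_coe.mp hGM)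
      _ = vSub D K M := vSub_inv_inv M
      _ ≤ tSub D K I := vSub_le_tSub hM hMfg hMI

theorem mul_tSub_le_tSub_mul (E Z : FractionalIdeal D⁰ K) :
    (E : Submodule D K) * tSub D K Z ≤ tSub D K (E * Z) := by
  rw [tSub, Submodule.mul_iSup]
  refine iSup_le fun ⟨G, hG, hGfg, hGZ⟩ => Submodule.mul_le.mpr fun x hxE y hy => ?_
  rcases eq_or_ne x 0 with rfl | hx0
  · rw [zero_mul]
    exact zero_mem _
  have hx : spanSingleton D⁰ x ≠ 0 := spanSingleton_eq_zero_iff.not.mpr hx0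
  have hxG : ((spanSingleton D⁰ x * G : FractionalIdeal D⁰ K) : Submodule D K).FG := by
    rw [coe_mul, coe_spanSingleton]
    exact (Submodule.fg_span_singleton x).mul hGfg
  refine vSub_le_tSub (mul_ne_zero_of_ne_zero hx hG) hxG ?_
    (mul_inv_inv_le _ G (mul_mem_mul (mem_spanSingleton_self D⁰ x) hy))
  exact mul_le_mul' (spanSingleton_le_iff_mem.mpr hxE) hGZ

theorem le_tSub_mul_of_tSub_eq_one {E Z : FractionalIdeal D⁰ K}
    (hZ : tSub D K Z = ((1 : FractionalIdeal D⁰ K) : Submodule D K)) :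
    (E : Submodule D K) ≤ tSub D K (E * Z) := by
  calc (E : Submodule D K) = E * tSub D K Z := by rw [hZ, coe_one, mul_one]
    _ ≤ tSub D K (E * Z) := mul_tSub_le_tSub_mul E Z

theorem isTIdeal_sSup {c : Set (Ideal D)} (hc : ∀ Q ∈ c, IsTIdeal D K Q)
    (hdir : DirectedOn (· ≤ ·) c) (hne : c.Nonempty) : IsTIdeal D K (sSup c) := by
  have : Nonempty c := hne.to_subtype
  refine le_antisymm (iSup_le fun ⟨G, hG, hGfg, hGc⟩ => ?_) (le_tSub _)
  have hdir' : Directed (· ≤ ·)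
      fun Q : c => (((Q : Ideal D) : FractionalIdeal D⁰ K) : Submodule D K) :=
    hdir.directed_val.mono_comp _
      (g := fun Q : Ideal D => ((Q : FractionalIdeal D⁰ K) : Submodule D K))
      fun _ _ h => coe_le_coe.mpr ((coeIdeal_le_coeIdeal K).mpr h)
  obtain ⟨⟨Q, hQ⟩, hGQ⟩ :=
    hGfg.exists_le_of_le_iSup hdir' ((coe_le_coe.mpr hGc).trans_eq (coe_coeIdeal_sSup c))
  calc vSub D K G ≤ tSub D K Q := vSub_le_tSub hG hGfg (coe_le_coe.mp hGQ)
    _ = ((Q : FractionalIdeal D⁰ K) : Submodule D K) := hc Q hQ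
    _ ≤ ((sSup c : Ideal D) : FractionalIdeal D⁰ K) :=
      coe_le_coe.mpr ((coeIdeal_le_coeIdeal K).mpr (le_sSup hQ))

theorem exists_isMaximalTIdeal_ge {X : Ideal D} (hX : IsTIdeal D K X) (hXtop : X ≠ ⊤) :
    ∃ Q : Ideal D, IsMaximalTIdeal D K Q ∧ X ≤ Q := by
  have hchains : ∀ c ⊆ {Q : Ideal D | IsTIdeal D K Q ∧ Q ≠ ⊤}, IsChain (· ≤ ·) c →
      ∀ Q₀ ∈ c, ∃ Q ∈ {Q : Ideal D | IsTIdeal D K Q ∧ Q ≠ ⊤}, ∀ Q' ∈ c, Q' ≤ Q := by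
    intro c hcs hchain Q₀ hQ₀
    refine ⟨sSup c, ⟨isTIdeal_sSup (fun Q hQ => (hcs hQ).1) hchain.directedOn ⟨Q₀, hQ₀⟩, ?_⟩,
      fun _ => le_sSup⟩
    rw [Ne, Ideal.eq_top_iff_one, Submodule.mem_sSup_of_directed ⟨Q₀, hQ₀⟩ hchain.directedOn]
    rintro ⟨Q, hQ, hQ1⟩
    exact (hcs hQ).2 ((Ideal.eq_top_iff_one Q).mpr hQ1)
  obtain ⟨Q, hXQ, hQ⟩ := zorn_le_nonempty₀ _ hchains X ⟨hX, hXtop⟩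
  exact ⟨Q, ⟨hQ.1.1, hQ.1.2, fun Q' hQ' hQ'top hle => le_antisymm hle (hQ.2 ⟨hQ', hQ'top⟩ hle)⟩,
    hXQ⟩

theorem exists_isMaximalTIdeal_ge_of_tSub_ne_one {X : FractionalIdeal D⁰ K} (hX1 : X ≤ 1)
    (hX : tSub D K X ≠ ((1 : FractionalIdeal D⁰ K) : Submodule D K)) :
    ∃ Q : Ideal D, IsMaximalTIdeal D K Q ∧ X ≤ Q := by
  set Q₀ : Ideal D := Submodule.comap (Algebra.linearMap D K) (tSub D K X)
  have hQ₀ : ((Q₀ : FractionalIdeal D⁰ K) : Submodule D K) = tSub D K X := by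
    rw [coe_coeIdeal, IsLocalization.coeSubmodule, Submodule.map_comap_eq, inf_eq_right]
    calc tSub D K X ≤ tSub D K 1 := tSub_mono hX1
      _ = _ := by rw [tSub_one, coe_one, Submodule.one_eq_range]
  have hQ₀t : IsTIdeal D K Q₀ := (tSub_eq_of_coe_eq_tSub hQ₀).trans hQ₀.symm
  have hQ₀top : Q₀ ≠ ⊤ := by
    intro h
    rw [← hQ₀, h, coeIdeal_top] at hX
    exact hX rfl
  obtain ⟨Q, hQ, hQ₀Q⟩ := exists_isMaximalTIdeal_ge hQ₀t hQ₀top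
  refine ⟨Q, hQ, coe_le_coe.mp ?_⟩
  calc (X : Submodule D K) ≤ tSub D K X := le_tSub X
    _ = ((Q₀ : FractionalIdeal D⁰ K) : Submodule D K) := hQ₀.symm
    _ ≤ ((Q : FractionalIdeal D⁰ K) : Submodule D K) :=
      coe_le_coe.mpr ((coeIdeal_le_coeIdeal K).mpr hQ₀Q)

theorem tSub_mul_inv_le_one (H : FractionalIdeal D⁰ K) :
    tSub D K (H * H⁻¹) ≤ ((1 : FractionalIdeal D⁰ K) : Submodule D K) :=
  (tSub_mono (mul_inv_le_one' H)).trans tSub_one.le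

theorem IsTInvertible.inv_inv {C : FractionalIdeal D⁰ K} (hC : IsTInvertible D K C) :
    IsTInvertible D K C⁻¹⁻¹ := by
  refine le_antisymm (tSub_mul_inv_le_one _) ?_
  rw [← hC, inv_inv_inv]
  exact tSub_mono (by gcongr; exact le_inv_inv C)

theorem isTIdeal_of_coe_eq_vSub {I : Ideal D} {A : FractionalIdeal D⁰ K}
    (h : ((I : FractionalIdeal D⁰ K) : Submodule D K) = vSub D K A) : IsTIdeal D K I := by
  refine le_antisymm ?_ (le_tSub _)
  calc tSub D K I ≤ vSub D K I := tSub_le_vSub _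
    _ = vSub D K A⁻¹⁻¹ := congrArg (vSub D K) (coeToSubmodule_injective h)
    _ = ((I : FractionalIdeal D⁰ K) : Submodule D K) := (vSub_inv_inv A).trans h.symm

theorem le_of_coe_eq_vSub {I A : Ideal D}
    (h : ((I : FractionalIdeal D⁰ K) : Submodule D K) = vSub D K A) : A ≤ I :=
  (coeIdeal_le_coeIdeal K).mp ((le_inv_inv _).trans_eq (coeToSubmodule_injective h).symm)

theorem IsPIdeal.le_or_mul_inv_le {P I : Ideal D} (hI : IsPIdeal D K P I)
    {H : FractionalIdeal D⁰ K} (hH : IsTInvertible D K H) (hH1 : H ≤ 1)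
    (hIH : (I : FractionalIdeal D⁰ K) ≤ H) : H ≤ I ∨ (I : FractionalIdeal D⁰ K) * H⁻¹ ≤ P := by
  obtain ⟨⟨A, -, -, hIA⟩, -, hrigid⟩ := hI
  have hIt : IsTIdeal D K I := isTIdeal_of_coe_eq_vSub hIA
  by_cases hX : tSub D K (I * H⁻¹) = ((1 : FractionalIdeal D⁰ K) : Submodule D K)
  · left
    have hHIH : H * (I * H⁻¹) ≤ I := calc
      H * (I * H⁻¹) = I * (H * H⁻¹) := by ring
      _ ≤ I * 1 := by gcongr; exact mul_inv_le_one' H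
      _ = I := mul_one _
    exact coe_le_coe.mp ((le_tSub_mul_of_tSub_eq_one hX).trans ((tSub_mono hHIH).trans hIt.le))
  · right
    obtain ⟨Q, hQ, hXQ⟩ := exists_isMaximalTIdeal_ge_of_tSub_ne_one
      ((mul_le_mul_of_nonneg_right hIH (zero_le _)).trans (mul_inv_le_one' H)) hX
    have hIHQ : I * (H * H⁻¹) ≤ Q := calc
      I * (H * H⁻¹) = I * H⁻¹ * H := by ring
      _ ≤ Q * 1 := mul_le_mul' hXQ hH1
      _ = Q := mul_one _
    have hIQ : I ≤ Q := (coeIdeal_le_coeIdeal K).mp <| coe_le_coe.mp <|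
      (le_tSub_mul_of_tSub_eq_one hH).trans ((tSub_mono hIHQ).trans hQ.1.le)
    rwa [← hrigid Q hQ hIQ]

end TOperation

/-- In a PVMD, the set of `P`-ideals is totally ordered by inclusion. -/
theorem stmt_12 (hD : IsPVMD D K) (P : Ideal D) (hP : IsMaximalTIdeal D K P)
    (I J : Ideal D) (hI : IsPIdeal D K P I) (hJ : IsPIdeal D K P J) :
    I ≤ J ∨ J ≤ I := by
  obtain ⟨A, hA, hAfg, hIA⟩ := hI.1
  obtain ⟨B, -, hBfg, hJB⟩ := hJ.1
  set C : FractionalIdeal D⁰ K := ((A ⊔ B : Ideal D) : FractionalIdeal D⁰ K) with hC_def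
  have hC : IsTInvertible D K C :=
    hD _ (ne_bot_of_le_ne_bot hA le_sup_left) (Submodule.FG.sup hAfg hBfg)
  have hH1 : C⁻¹⁻¹ ≤ 1 :=
    (inv_inv_mono coeIdeal_le_one).trans_eq (by rw [inv_one, inv_one])
  have hIH : (I : FractionalIdeal D⁰ K) ≤ C⁻¹⁻¹ :=
    coe_le_coe.mp (hIA.trans_le (vSub_mono ((coeIdeal_le_coeIdeal K).mpr le_sup_left)))
  have hJH : (J : FractionalIdeal D⁰ K) ≤ C⁻¹⁻¹ :=
    coe_le_coe.mp (hJB.trans_le (vSub_mono ((coeIdeal_le_coeIdeal K).mpr le_sup_right)))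
  rcases hI.le_or_mul_inv_le hC.inv_inv hH1 hIH with hHI | hIP
  · exact Or.inr ((coeIdeal_le_coeIdeal K).mp (hJH.trans hHI))
  rcases hJ.le_or_mul_inv_le hC.inv_inv hH1 hJH with hHJ | hJP
  · exact Or.inl ((coeIdeal_le_coeIdeal K).mp (hIH.trans hHJ))
  have hCP : C * C⁻¹ ≤ P := calc
    C * C⁻¹ = (A + B) * C⁻¹⁻¹⁻¹ := by rw [inv_inv_inv, hC_def, coeIdeal_sup]
    _ ≤ I * C⁻¹⁻¹⁻¹ + J * C⁻¹⁻¹⁻¹ := by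
      rw [add_mul]
      gcongr
      exacts [le_of_coe_eq_vSub hIA, le_of_coe_eq_vSub hJB]
    _ ≤ P := by rw [← sup_eq_add]; exact sup_le hIP hJP
  have h1P : ((1 : FractionalIdeal D⁰ K) : Submodule D K) ≤ (P : FractionalIdeal D⁰ K) :=
    hC.symm.le.trans ((tSub_mono hCP).trans hP.1.le)
  rw [← coeIdeal_top, coe_le_coe, coeIdeal_le_coeIdeal, top_le_iff] at h1P
  exact absurd h1P hP.2.1
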